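/- arXiv:2411.04452 — 4 statements merged into one kernel-verified Lean document; each statement's English description precedes it below -/
import Mathlib

section
/- Suppose ρ★ ∈ ℂ^{D×D} is Hermitian positive semidefinite with rank(ρ★) ≤ r, and the measurement map 𝒜 satisfies the (2r, δ)-RIP with δ ≤ 0.09. Let ŷ ∈ ℝ^K and e_k = ŷ_k − trace(A_k ρ★). If U ∈ ℂ^{D×r} is a critical point, i.e., G(U) = 0, and ‖U U^H − ρ★‖_F > h(δ)·(D√r/K)·‖𝒜*(e)‖, then U is a strict saddle point: there exists Δ ∈ ℂ^{D×r} such that the Wirtinger Hessian quadratic form satisfies H_U(Δ) < 0. -/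
/-!
Write `ρ★ = W Wᴴ` with `W ∈ ℂ^{D×r}` chosen so that `Uᴴ W` is Hermitian: take any factor `Z` and
a unitary `R` from the polar decomposition of `Uᴴ Z`, and set `W = Z R`. Probe the Hessian in the
direction `i (U − W)`. At a critical point `M = 𝒜*(𝒜(UUᴴ) − ŷ)` kills `U`, so the curvature term
becomes `−2 (D/K) Re⟨M, Φ⟩ = −2 (D/K) ‖𝒜(Φ)‖² + 2 (D/K) Re⟨𝒜*(e), Φ⟩` with `Φ = UUᴴ − ρ★`,
while the rotation by `i` turns the first term into `(D/K) ‖𝒜(WUᴴ − UWᴴ)‖²`. Because `UᴴW` is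
Hermitian, `‖WUᴴ − UWᴴ‖_F ≤ ‖Φ‖_F`; every matrix here has rank at most `2r`, so the RIP and
`Re⟨N, Φ⟩ ≤ ‖N‖ √(rank Φ) ‖Φ‖_F` give
`H_U(i (U − W)) ≤ (3δ − 1) ‖Φ‖_F² + 2√2 (D√r/K) ‖𝒜*(e)‖ ‖Φ‖_F`.
For `δ ≤ 0.09` one has `2√2 ≤ (1 − 3δ) h(δ)`, so the right side is negative as soon as
`‖Φ‖_F > h(δ) (D√r/K) ‖𝒜*(e)‖`.
-/

open Matrix
open scoped BigOperators ComplexOrder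

/-- Frobenius norm of a complex matrix. -/
noncomputable def frobNorm {m n : ℕ} (A : Matrix (Fin m) (Fin n) ℂ) : ℝ :=
  Real.sqrt (∑ i, ∑ j, ‖A i j‖ ^ 2)

/-- Spectral norm (largest singular value) of a complex matrix, as the operator
norm of the induced map between Euclidean spaces. -/
noncomputable def specNorm {m n : ℕ} (A : Matrix (Fin m) (Fin n) ℂ) : ℝ :=
  ‖LinearMap.toContinuousLinearMap (Matrix.toEuclideanLin A)‖

/-- The measurement map `𝒜(ρ)_k = trace (A k * ρ)` satisfies the `(s, δ)`-RIP. -/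
def IsRIP {D K : ℕ} (A : Fin K → Matrix (Fin D) (Fin D) ℂ) (s : ℕ) (δ : ℝ) : Prop :=
  ∀ ρ : Matrix (Fin D) (Fin D) ℂ, ρ.rank ≤ s →
    (1 - δ) * frobNorm ρ ^ 2 ≤ ((D : ℝ) / (K : ℝ)) * ∑ k, ‖Matrix.trace (A k * ρ)‖ ^ 2 ∧
      ((D : ℝ) / (K : ℝ)) * ∑ k, ‖Matrix.trace (A k * ρ)‖ ^ 2 ≤ (1 + δ) * frobNorm ρ ^ 2

/-- The adjoint of the measurement map: `𝒜*(e) = Σ_k e_k A_k`. -/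
noncomputable def adjointMap {D K : ℕ} (A : Fin K → Matrix (Fin D) (Fin D) ℂ)
    (e : Fin K → ℝ) : Matrix (Fin D) (Fin D) ℂ :=
  ∑ k, (e k : ℂ) • A k

/-- The Wirtinger gradient `G(U) = (D/K) Σ_k (trace(A_k U Uᴴ) − ŷ_k) A_k U`. -/
noncomputable def wGrad {D K r : ℕ} (A : Fin K → Matrix (Fin D) (Fin D) ℂ)
    (yhat : Fin K → ℝ) (U : Matrix (Fin D) (Fin r) ℂ) : Matrix (Fin D) (Fin r) ℂ :=
  ((D : ℂ) / (K : ℂ)) • ∑ k, (Matrix.trace (A k * (U * Uᴴ)) - (yhat k : ℂ)) • (A k * U)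

/-- The Wirtinger Hessian quadratic form at `U` in direction `Δ`. -/
noncomputable def wHess {D K r : ℕ} (A : Fin K → Matrix (Fin D) (Fin D) ℂ)
    (yhat : Fin K → ℝ) (U Δ : Matrix (Fin D) (Fin r) ℂ) : ℝ :=
  (2 * (D : ℝ) / (K : ℝ)) * ∑ k, (‖Matrix.trace (A k * (U * Δᴴ))‖ ^ 2
      + ((Matrix.trace (A k * (U * Δᴴ))) ^ 2).re)
    + (2 * (D : ℝ) / (K : ℝ)) *
      (Matrix.trace ((∑ k, (Matrix.trace (A k * (U * Uᴴ)) - (yhat k : ℂ)) • A k)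
        * (Δ * Δᴴ))).re

/-- The function `h(δ)` from the recovery-error bound. -/
noncomputable def hfun (δ : ℝ) : ℝ :=
  (Real.sqrt 2 + Real.sqrt (82.55 - 762.54 * δ - 843.09 * δ ^ 2)) / (1.5 - 15.7 * δ)

/-- The smallest singular value `σ_r(X)`: the square root of the smallest
eigenvalue of `Xᴴ X`. -/
noncomputable def sigmaMin {D r : ℕ} (X : Matrix (Fin D) (Fin r) ℂ) : ℝ :=
  Real.sqrt (⨅ i : Fin r, (Matrix.isHermitian_conjTranspose_mul_self X).eigenvalues i)

open scoped InnerProductSpace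

theorem LinearMap.exists_linearIsometry_apply_eq_of_norm_eq {𝕜 E F : Type*} [RCLike 𝕜]
    [NormedAddCommGroup E] [InnerProductSpace 𝕜 E] [FiniteDimensional 𝕜 E]
    [AddCommGroup F] [Module 𝕜 F] (f g : F →ₗ[𝕜] E) (h : ∀ x, ‖f x‖ = ‖g x‖) :
    ∃ L : E →ₗᵢ[𝕜] E, ∀ x, L (f x) = g x := by
  have hker : ker f ≤ ker g := fun x hx => by
    rw [mem_ker, ← norm_eq_zero, ← h, mem_ker.mp hx, norm_zero]
  let L₀ : range f →ₗ[𝕜] E := (ker f).liftQ g hker ∘ₗ f.quotKerEquivRange.symm.toLinearMap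
  have hL₀ : ∀ x, L₀ ⟨f x, mem_range_self f x⟩ = g x := fun x => by simp [L₀]
  let L₁ : range f →ₗᵢ[𝕜] E :=
    { L₀ with norm_map' := by rintro ⟨_, x, rfl⟩; exact congrArg norm (hL₀ x) |>.trans (h x).symm }
  exact ⟨L₁.extend, fun x => (L₁.extend_apply ⟨f x, mem_range_self f x⟩).trans (hL₀ x)⟩

open scoped MatrixOrder in
theorem Matrix.exists_mem_unitaryGroup_mul_isHermitian {𝕜 n : Type*} [RCLike 𝕜] [Fintype n]
    [DecidableEq n] (B : Matrix n n 𝕜) : ∃ R ∈ unitaryGroup n 𝕜, (B * R).IsHermitian := by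
  -- polar decomposition `Bᴴ = R P` with `P = √(B Bᴴ)`
  let toCLM := toEuclideanCLM (n := n) (𝕜 := 𝕜)
  set P := CFC.sqrt (B * Bᴴ)
  have hP : Pᴴ = P := (CFC.sqrt_nonneg (B * Bᴴ)).isSelfAdjoint
  have hPP : Pᴴ * P = Bᴴᴴ * Bᴴ := by
    rw [hP, conjTranspose_conjTranspose,
      CFC.sqrt_mul_sqrt_self _ (posSemidef_self_mul_conjTranspose B).nonneg]
  have hnorm : ∀ x, ‖toCLM P x‖ = ‖toCLM Bᴴ x‖ := fun x => by
    simp only [ContinuousLinearMap.apply_norm_eq_sqrt_inner_adjoint_left,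
      ← ContinuousLinearMap.star_eq_adjoint, ← ContinuousLinearMap.mul_def, ← map_star, ← map_mul,
      star_eq_conjTranspose, hPP]
  obtain ⟨L, hL⟩ := LinearMap.exists_linearIsometry_apply_eq_of_norm_eq
    (toCLM P).toLinearMap (toCLM Bᴴ).toLinearMap hnorm
  set R := toCLM.symm L.toContinuousLinearMap
  have hR : star R * R = 1 := EquivLike.injective toCLM <| by
    rw [map_mul, map_star, map_one, StarAlgEquiv.apply_symm_apply,
      ContinuousLinearMap.star_eq_adjoint, ContinuousLinearMap.mul_def,
      ← ContinuousLinearMap.norm_map_iff_adjoint_comp_self]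
    exact L.norm_map
  have hRP : R * P = Bᴴ := EquivLike.injective toCLM <| by
    ext1 x
    rw [map_mul, mul_apply_eq_comp, StarAlgEquiv.apply_symm_apply]
    exact hL x
  have hBR : B * R = P :=
    calc B * R = (star R * Bᴴ)ᴴ := by
          rw [conjTranspose_mul, conjTranspose_conjTranspose, star_eq_conjTranspose,
            conjTranspose_conjTranspose]
      _ = P := by rw [← hRP, ← mul_assoc, hR, one_mul, hP]
  exact ⟨R, mem_unitaryGroup_iff'.mpr hR, hBR ▸ hP⟩

theorem Matrix.PosSemidef.exists_mul_conjTranspose_eq {𝕜 n ι : Type*} [RCLike 𝕜] [Fintype n]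
    [DecidableEq n] [Fintype ι] [DecidableEq ι] {ρ : Matrix n n 𝕜} (hρ : ρ.PosSemidef)
    (hrank : ρ.rank ≤ Fintype.card ι) : ∃ Z : Matrix n ι 𝕜, Z * Zᴴ = ρ := by
  -- `ρ = C Cᴴ` for `C = V diag(√μ)`; only the columns of `C` with `μ i ≠ 0` are nonzero, and
  -- there are at most `card ι` of them.
  set μ := hρ.1.eigenvalues
  set C : Matrix n n 𝕜 := hρ.1.eigenvectorUnitary * diagonal fun i => ((μ i).sqrt : 𝕜)
  have hsqrt : (diagonal fun i => ((μ i).sqrt : 𝕜)) * (diagonal fun i => ((μ i).sqrt : 𝕜))ᴴ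
      = diagonal (RCLike.ofReal ∘ μ) := by
    rw [diagonal_conjTranspose, diagonal_mul_diagonal]
    congr 1
    ext i
    simp [← RCLike.ofReal_mul, Real.mul_self_sqrt (hρ.eigenvalues_nonneg i), μ]
  have hC : C * Cᴴ = ρ := by
    conv_rhs => rw [hρ.1.spectral_theorem, Unitary.conjStarAlgAut_apply, ← hsqrt]
    simp only [C, conjTranspose_mul, star_eq_conjTranspose, mul_assoc]
  obtain ⟨emb⟩ : Nonempty ({i // μ i ≠ 0} ↪ ι) :=
    Function.Embedding.nonempty_of_card_le (hρ.1.rank_eq_card_non_zero_eigs ▸ hrank)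
  set G := C.submatrix id (Subtype.val : {i // μ i ≠ 0} → n)
  set P := (1 : Matrix ι ι 𝕜).submatrix emb id
  have hP : P * Pᴴ = 1 := by
    rw [conjTranspose_submatrix, conjTranspose_one, ← submatrix_mul _ _ _ _ _ Function.bijective_id,
      mul_one, submatrix_one _ emb.injective]
  have hG : G * Gᴴ = C * Cᴴ := by
    ext i j
    simp only [G, mul_apply, conjTranspose_apply, submatrix_apply, id]
    symm
    rw [← Fintype.sum_subtype_add_sum_subtype (fun k => μ k ≠ 0), add_eq_left]
    refine Finset.sum_eq_zero fun k _ => ?_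
    simp [C, mul_diagonal, not_not.mp k.2]
  exact ⟨G * P, by
    rw [conjTranspose_mul, Matrix.mul_assoc, ← Matrix.mul_assoc P, hP, Matrix.one_mul, hG, hC]⟩

theorem Matrix.rank_mul_add_mul_le {R m n ι κ : Type*} [CommRing R] [StrongRankCondition R]
    [Fintype n] [Fintype ι] [Fintype κ]
    (P : Matrix m ι R) (S : Matrix ι n R) (Q : Matrix m κ R) (T : Matrix κ n R) :
    (P * S + Q * T).rank ≤ Fintype.card ι + Fintype.card κ := by
  rw [← fromCols_mul_fromRows]
  exact (rank_mul_le_left _ _).trans ((rank_le_card_width _).trans (by simp))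

theorem Matrix.IsHermitian.star_trace_mul {α n : Type*} [CommSemiring α] [StarRing α] [Fintype n]
    {A : Matrix n n α} (hA : A.IsHermitian) (X : Matrix n n α) :
    star (trace (A * X)) = trace (A * Xᴴ) := by
  rw [← trace_conjTranspose, conjTranspose_mul, hA.eq, trace_mul_comm]

theorem Matrix.trace_mul_sub_mul_conjTranspose_sub {α n m : Type*} [CommRing α] [StarRing α]
    [Fintype n] [Fintype m] {M : Matrix n n α} (hM : M.IsHermitian) {U : Matrix n m α}
    (hMU : M * U = 0) (W : Matrix n m α) :
    trace (M * ((U - W) * (U - W)ᴴ)) = trace (M * (W * Wᴴ)) := by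
  have hUM : Uᴴ * M = 0 := by rw [← hM.eq, ← conjTranspose_mul, hMU, conjTranspose_zero]
  calc trace (M * ((U - W) * (U - W)ᴴ)) = trace ((U - W)ᴴ * (M * (U - W))) := by
        rw [← Matrix.mul_assoc, trace_mul_comm]
    _ = trace (Wᴴ * (M * W)) := by
        rw [Matrix.mul_sub, hMU, zero_sub, conjTranspose_sub, Matrix.sub_mul, Matrix.mul_neg,
          ← Matrix.mul_assoc Uᴴ, hUM]
        simp
    _ = trace (M * (W * Wᴴ)) := by rw [trace_mul_comm, Matrix.mul_assoc]

theorem Matrix.IsHermitian.trace_mul_eq_sum_inner {𝕜 n : Type*} [RCLike 𝕜] [Fintype n]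
    [DecidableEq n] (N : Matrix n n 𝕜) {Φ : Matrix n n 𝕜} (hΦ : Φ.IsHermitian) :
    trace (N * Φ) = ∑ i, (hΦ.eigenvalues i : 𝕜) *
      ⟪hΦ.eigenvectorBasis i, toEuclideanLin N (hΦ.eigenvectorBasis i)⟫_𝕜 := by
  conv_lhs => rw [hΦ.spectral_theorem, Unitary.conjStarAlgAut_apply, ← Matrix.mul_assoc,
    trace_mul_cycle, ← Matrix.mul_assoc]
  refine Finset.sum_congr rfl fun i _ => ?_
  rw [diag_apply, mul_diagonal, mul_comm, Function.comp_apply]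
  congr 1
  simp only [EuclideanSpace.inner_eq_star_dotProduct, ofLp_toLpLin, toLin'_apply, dotProduct,
    mulVec, mul_apply, star_apply, Pi.star_apply, IsHermitian.eigenvectorUnitary_apply,
    Finset.sum_mul]
  rw [Finset.sum_comm]
  exact Finset.sum_congr rfl fun _ _ => Finset.sum_congr rfl fun _ _ => by ring

theorem Matrix.IsHermitian.re_trace_mul_sq {n : Type*} [Fintype n] {A X : Matrix n n ℂ}
    (hA : A.IsHermitian) (hX : X.IsHermitian) : ((trace (A * X)) ^ 2).re = ‖trace (A * X)‖ ^ 2 := by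
  have him : (trace (A * X)).im = 0 := by
    have := hA.star_trace_mul X
    rw [hX.eq] at this
    exact Complex.conj_eq_iff_im.mp this
  rw [Complex.sq_norm, Complex.normSq_apply, sq, Complex.mul_re, him]
  ring

theorem Complex.norm_sq_add_re_sq_neg_I_mul (z : ℂ) :
    ‖-I * z‖ ^ 2 + ((-I * z) ^ 2).re = ‖z - (starRingEnd ℂ) z‖ ^ 2 / 2 := by
  rw [Complex.sq_norm, Complex.sq_norm, Complex.normSq_apply, Complex.normSq_apply]
  simp only [sq, Complex.mul_re, Complex.mul_im, Complex.neg_re, Complex.neg_im, Complex.I_re,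
    Complex.I_im, Complex.sub_re, Complex.sub_im, Complex.conj_re, Complex.conj_im]
  ring

theorem sum_abs_le_sqrt_card_ne_zero_mul_sqrt_sum_sq {ι : Type*} [Fintype ι] (f : ι → ℝ) :
    ∑ i, |f i| ≤ √(Fintype.card {i // f i ≠ 0}) * √(∑ i, f i ^ 2) := by
  classical
  set s := Finset.univ.filter fun i => f i ≠ 0
  have hsupp : ∑ i ∈ s, |f i| = ∑ i, |f i| :=
    Finset.sum_filter_of_ne fun i _ h => abs_ne_zero.mp h
  have hcs := sq_sum_le_card_mul_sum_sq (s := s) (f := fun i => |f i|)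
  have hsq : ∑ i ∈ s, |f i| ^ 2 ≤ ∑ i, f i ^ 2 := by
    simp only [sq_abs]
    exact Finset.sum_le_sum_of_subset_of_nonneg (Finset.subset_univ s) fun i _ _ => sq_nonneg _
  rw [← Real.sqrt_mul (Nat.cast_nonneg _), ← hsupp, Fintype.card_subtype]
  apply Real.le_sqrt_of_sq_le
  calc _ ≤ (s.card : ℝ) * ∑ i ∈ s, |f i| ^ 2 := hcs
    _ ≤ _ := by gcongr

theorem frobNorm_nonneg {m n : ℕ} (X : Matrix (Fin m) (Fin n) ℂ) : 0 ≤ frobNorm X :=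
  Real.sqrt_nonneg _

theorem frobNorm_sq_eq_re_trace {m n : ℕ} (X : Matrix (Fin m) (Fin n) ℂ) :
    frobNorm X ^ 2 = (trace (Xᴴ * X)).re := by
  rw [frobNorm, Real.sq_sqrt (by positivity), trace, Complex.re_sum, Finset.sum_comm]
  refine Finset.sum_congr rfl fun j _ => ?_
  simp only [diag_apply, mul_apply, conjTranspose_apply, Complex.re_sum, Complex.star_def,
    Complex.mul_re, Complex.conj_re, Complex.conj_im, Complex.sq_norm, Complex.normSq_apply]
  exact Finset.sum_congr rfl fun i _ => by ring

theorem frobNorm_sq_mul_conjTranspose_sub {D r : ℕ} (U W : Matrix (Fin D) (Fin r) ℂ)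
    (hUW : (Uᴴ * W).IsHermitian) :
    frobNorm (U * Uᴴ - W * Wᴴ) ^ 2
      = frobNorm (W * Uᴴ - U * Wᴴ) ^ 2 + frobNorm (Uᴴ * U - Wᴴ * W) ^ 2 := by
  have h : Wᴴ * U = Uᴴ * W := by simpa [conjTranspose_mul] using hUW.eq
  simp only [frobNorm_sq_eq_re_trace, ← Complex.add_re]
  congr 1
  -- cycle every trace into a product of the `r × r` blocks `UᴴU`, `WᴴW`, `UᴴW = WᴴU`
  simp only [conjTranspose_sub, conjTranspose_mul, conjTranspose_conjTranspose, Matrix.sub_mul,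
    Matrix.mul_sub, trace_sub, Matrix.mul_assoc]
  simp only [trace_mul_comm U, trace_mul_comm W, Matrix.mul_assoc]
  simp only [← Matrix.mul_assoc, h]
  ring

theorem Matrix.IsHermitian.frobNorm_sq_eq_sum_eigenvalues_sq {D : ℕ}
    {Φ : Matrix (Fin D) (Fin D) ℂ} (hΦ : Φ.IsHermitian) :
    frobNorm Φ ^ 2 = ∑ i, hΦ.eigenvalues i ^ 2 := by
  have hinner : ∀ i, ⟪hΦ.eigenvectorBasis i, toEuclideanLin Φ (hΦ.eigenvectorBasis i)⟫_ℂ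
      = hΦ.eigenvalues i := fun i => by
    have : toEuclideanLin Φ (hΦ.eigenvectorBasis i)
        = (hΦ.eigenvalues i : ℂ) • hΦ.eigenvectorBasis i := by
      ext1
      simp [hΦ.mulVec_eigenvectorBasis]
    rw [this, inner_smul_right, inner_self_eq_norm_sq_to_K, OrthonormalBasis.norm_eq_one]
    simp
  rw [frobNorm_sq_eq_re_trace, hΦ.eq, hΦ.trace_mul_eq_sum_inner, Complex.re_sum]
  simp [hinner, ← Complex.ofReal_mul, sq]

theorem norm_inner_toEuclideanLin_le_specNorm {D : ℕ} (N : Matrix (Fin D) (Fin D) ℂ)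
    {v : EuclideanSpace ℂ (Fin D)} (hv : ‖v‖ = 1) :
    ‖⟪v, toEuclideanLin N v⟫_ℂ‖ ≤ specNorm N :=
  calc ‖⟪v, toEuclideanLin N v⟫_ℂ‖ ≤ ‖v‖ * ‖toEuclideanLin N v‖ := norm_inner_le_norm _ _
    _ ≤ ‖v‖ * (specNorm N * ‖v‖) := by
      gcongr
      exact (LinearMap.toContinuousLinearMap (toEuclideanLin N)).le_opNorm v
    _ = specNorm N := by rw [hv]; ring

theorem Matrix.IsHermitian.re_trace_mul_le {D : ℕ} (N : Matrix (Fin D) (Fin D) ℂ)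
    {Φ : Matrix (Fin D) (Fin D) ℂ} (hΦ : Φ.IsHermitian) :
    (trace (N * Φ)).re ≤ specNorm N * √Φ.rank * frobNorm Φ := by
  set μ := hΦ.eigenvalues
  have hterm : ∀ i, (↑(μ i) * ⟪hΦ.eigenvectorBasis i,
      toEuclideanLin N (hΦ.eigenvectorBasis i)⟫_ℂ).re ≤ |μ i| * specNorm N := fun i =>
    calc _ ≤ ‖(μ i : ℂ) * ⟪hΦ.eigenvectorBasis i,
          toEuclideanLin N (hΦ.eigenvectorBasis i)⟫_ℂ‖ := Complex.re_le_norm _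
      _ ≤ |μ i| * specNorm N := by
        rw [norm_mul, Complex.norm_real, Real.norm_eq_abs]
        exact mul_le_mul_of_nonneg_left
          (norm_inner_toEuclideanLin_le_specNorm N (OrthonormalBasis.norm_eq_one _ i))
          (abs_nonneg _)
  have hfrob : frobNorm Φ = √(∑ i, μ i ^ 2) := by
    rw [← hΦ.frobNorm_sq_eq_sum_eigenvalues_sq, Real.sqrt_sq (frobNorm_nonneg Φ)]
  calc (trace (N * Φ)).re ≤ ∑ i, |μ i| * specNorm N := by
        rw [hΦ.trace_mul_eq_sum_inner, Complex.re_sum]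
        exact Finset.sum_le_sum fun i _ => hterm i
    _ = specNorm N * ∑ i, |μ i| := by rw [← Finset.sum_mul, mul_comm]
    _ ≤ specNorm N * √Φ.rank * frobNorm Φ := by
        rw [mul_assoc, hfrob, hΦ.rank_eq_card_non_zero_eigs]
        exact mul_le_mul_of_nonneg_left (sum_abs_le_sqrt_card_ne_zero_mul_sqrt_sum_sq μ)
          (norm_nonneg _)

noncomputable def residualMatrix {D K r : ℕ} (A : Fin K → Matrix (Fin D) (Fin D) ℂ)
    (yhat : Fin K → ℝ) (U : Matrix (Fin D) (Fin r) ℂ) : Matrix (Fin D) (Fin D) ℂ :=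
  ∑ k, (trace (A k * (U * Uᴴ)) - (yhat k : ℂ)) • A k

section Loss

variable {D K r : ℕ} {A : Fin K → Matrix (Fin D) (Fin D) ℂ} {yhat : Fin K → ℝ}

theorem wGrad_eq_smul_residualMatrix_mul (U : Matrix (Fin D) (Fin r) ℂ) :
    wGrad A yhat U = ((D : ℂ) / K) • (residualMatrix A yhat U * U) := by
  simp only [wGrad, residualMatrix, Matrix.sum_mul, Matrix.smul_mul]

theorem residualMatrix_mul_eq_zero_of_wGrad_eq_zero (hD : 0 < D) (hK : 0 < K)
    {U : Matrix (Fin D) (Fin r) ℂ} (hcrit : wGrad A yhat U = 0) :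
    residualMatrix A yhat U * U = 0 := by
  rw [wGrad_eq_smul_residualMatrix_mul] at hcrit
  exact (smul_eq_zero.mp hcrit).resolve_left (by positivity)

theorem isHermitian_residualMatrix (hA : ∀ k, (A k).IsHermitian) (U : Matrix (Fin D) (Fin r) ℂ) :
    (residualMatrix A yhat U).IsHermitian := by
  refine isSelfAdjoint_sum _ fun k _ => IsSelfAdjoint.smul ?_ (hA k)
  rw [IsSelfAdjoint, star_sub, (hA k).star_trace_mul, Complex.star_def, Complex.conj_ofReal,
    conjTranspose_mul, conjTranspose_conjTranspose]

theorem wHess_I_smul_eq (hA : ∀ k, (A k).IsHermitian) (U Δ : Matrix (Fin D) (Fin r) ℂ) :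
    wHess A yhat U (Complex.I • Δ) =
      (D / K : ℝ) * ∑ k, ‖trace (A k * (U * Δᴴ - Δ * Uᴴ))‖ ^ 2
        + 2 * (D / K : ℝ) * (trace (residualMatrix A yhat U * (Δ * Δᴴ))).re := by
  have hrot : ∀ k, trace (A k * (U * (Complex.I • Δ)ᴴ)) = -Complex.I * trace (A k * (U * Δᴴ)) := by
    intro k
    simp [conjTranspose_smul, Matrix.mul_smul, trace_smul]
  have hconj : ∀ k, (starRingEnd ℂ) (trace (A k * (U * Δᴴ))) = trace (A k * (Δ * Uᴴ)) := by
    intro k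
    rw [← Complex.star_def, (hA k).star_trace_mul, conjTranspose_mul, conjTranspose_conjTranspose]
  have hΔΔ : (Complex.I • Δ) * (Complex.I • Δ)ᴴ = Δ * Δᴴ := by
    simp [conjTranspose_smul, Matrix.mul_smul, Matrix.smul_mul, smul_smul]
  simp only [wHess, hrot, Complex.norm_sq_add_re_sq_neg_I_mul, hconj, ← trace_sub, ← Matrix.mul_sub,
    hΔΔ, ← Finset.sum_div, residualMatrix]
  ring

theorem residualMatrix_eq_sum_sub_adjointMap {ρ : Matrix (Fin D) (Fin D) ℂ} {e : Fin K → ℝ}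
    (he : ∀ k, (e k : ℂ) = yhat k - trace (A k * ρ)) (U : Matrix (Fin D) (Fin r) ℂ) :
    residualMatrix A yhat U = ∑ k, trace (A k * (U * Uᴴ - ρ)) • A k - adjointMap A e := by
  simp only [residualMatrix, adjointMap, ← Finset.sum_sub_distrib, ← sub_smul, he,
    Matrix.mul_sub, trace_sub]
  congr 1
  ext1 k
  ring_nf

theorem re_trace_residualMatrix_mul_eq (hA : ∀ k, (A k).IsHermitian)
    {ρ : Matrix (Fin D) (Fin D) ℂ} (hρ : ρ.IsHermitian) {e : Fin K → ℝ}
    (he : ∀ k, (e k : ℂ) = yhat k - trace (A k * ρ)) {U : Matrix (Fin D) (Fin r) ℂ}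
    (hMU : residualMatrix A yhat U * U = 0) :
    (trace (residualMatrix A yhat U * ρ)).re = (trace (adjointMap A e * (U * Uᴴ - ρ))).re
      - ∑ k, ‖trace (A k * (U * Uᴴ - ρ))‖ ^ 2 := by
  have hΦ : (U * Uᴴ - ρ).IsHermitian := (isHermitian_mul_conjTranspose_self U).sub hρ
  have hρΦ : trace (residualMatrix A yhat U * ρ)
      = -trace (residualMatrix A yhat U * (U * Uᴴ - ρ)) := by
    rw [Matrix.mul_sub, trace_sub, ← Matrix.mul_assoc, hMU, Matrix.zero_mul, trace_zero, zero_sub,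
      neg_neg]
  rw [hρΦ, residualMatrix_eq_sum_sub_adjointMap he, Matrix.sub_mul, trace_sub, Matrix.sum_mul,
    trace_sum]
  simp only [Matrix.smul_mul, trace_smul, smul_eq_mul, ← sq, neg_sub, Complex.sub_re,
    Complex.re_sum, ((hA _).re_trace_mul_sq hΦ)]

theorem wHess_I_smul_sub_le (hA : ∀ k, (A k).IsHermitian) {δ : ℝ} (hδ : 0 ≤ δ)
    (hRIP : IsRIP A (2 * r) δ) {ρ : Matrix (Fin D) (Fin D) ℂ} (hρ : ρ.IsHermitian)
    {e : Fin K → ℝ} (he : ∀ k, (e k : ℂ) = yhat k - trace (A k * ρ))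
    {U : Matrix (Fin D) (Fin r) ℂ} (hMU : residualMatrix A yhat U * U = 0)
    {W : Matrix (Fin D) (Fin r) ℂ} (hWW : W * Wᴴ = ρ) (hUW : (Uᴴ * W).IsHermitian) :
    wHess A yhat U (Complex.I • (U - W)) ≤ (3 * δ - 1) * frobNorm (U * Uᴴ - ρ) ^ 2
      + 2 * (D / K) * (specNorm (adjointMap A e) * √(2 * r) * frobNorm (U * Uᴴ - ρ)) := by
  have hrank : ∀ (P Q : Matrix (Fin D) (Fin r) ℂ) (S T : Matrix (Fin r) (Fin D) ℂ),
      (P * S - Q * T).rank ≤ 2 * r := fun P Q S T => by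
    simpa [two_mul, ← sub_eq_add_neg] using rank_mul_add_mul_le P S Q (-T)
  have hY : U * (U - W)ᴴ - (U - W) * Uᴴ = W * Uᴴ - U * Wᴴ := by
    rw [conjTranspose_sub, Matrix.mul_sub, Matrix.sub_mul]
    abel
  have hRIP_Y : (D / K : ℝ) * ∑ k, ‖trace (A k * (U * (U - W)ᴴ - (U - W) * Uᴴ))‖ ^ 2
      ≤ (1 + δ) * frobNorm (U * Uᴴ - ρ) ^ 2 := by
    refine (hRIP _ (hY ▸ hrank _ _ _ _)).2.trans (mul_le_mul_of_nonneg_left ?_ (by linarith))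
    rw [hY, ← hWW, frobNorm_sq_mul_conjTranspose_sub U W hUW]
    exact le_add_of_nonneg_right (sq_nonneg _)
  have hRIP_Φ := (hRIP (U * Uᴴ - ρ) (hWW ▸ hrank U W Uᴴ Wᴴ)).1
  have hnoise : (trace (adjointMap A e * (U * Uᴴ - ρ))).re
      ≤ specNorm (adjointMap A e) * √(2 * r) * frobNorm (U * Uᴴ - ρ) := by
    have hrankΦ : ((U * Uᴴ - ρ).rank : ℝ) ≤ 2 * r := by
      rw [← hWW]
      exact_mod_cast hrank _ _ _ _
    refine (((isHermitian_mul_conjTranspose_self U).sub hρ).re_trace_mul_le _).trans ?_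
    exact mul_le_mul_of_nonneg_right (mul_le_mul_of_nonneg_left (Real.sqrt_le_sqrt hrankΦ)
      (norm_nonneg _)) (frobNorm_nonneg _)
  rw [wHess_I_smul_eq hA, trace_mul_sub_mul_conjTranspose_sub (isHermitian_residualMatrix hA U) hMU,
    hWW, re_trace_residualMatrix_mul_eq hA hρ he hMU]
  have hDK : (0 : ℝ) ≤ D / K := by positivity
  linarith [mul_le_mul_of_nonneg_left hnoise hDK]

end Loss

theorem two_mul_sqrt_two_le_hfun {δ : ℝ} (hδ0 : 0 ≤ δ) (hδ : δ ≤ 0.09) :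
    2 * √2 ≤ (1 - 3 * δ) * hfun δ := by
  have hsqrt2 : 1.4 ≤ √2 ∧ √2 ≤ 1.5 := by
    constructor
    · exact Real.le_sqrt_of_sq_le (by norm_num)
    · exact Real.sqrt_le_iff.mpr ⟨by norm_num, by norm_num⟩
  -- the root is concave in `δ`, and `9 - 71 δ` stays below its chord over `[0, 0.09]`
  have hroot : 9 - 71 * δ ≤ √(82.55 - 762.54 * δ - 843.09 * δ ^ 2) :=
    Real.le_sqrt_of_sq_le (by nlinarith)
  rw [hfun, mul_div_assoc', le_div_iff₀ (by linarith)]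
  nlinarith

theorem quadratic_neg_of_hfun_mul_lt {δ c P : ℝ} (hδ0 : 0 ≤ δ) (hδ : δ ≤ 0.09) (hc : 0 ≤ c)
    (hfar : hfun δ * c < P) : (3 * δ - 1) * P ^ 2 + 2 * √2 * c * P < 0 := by
  have hkey := two_mul_sqrt_two_le_hfun hδ0 hδ
  have hfun_pos : 0 < hfun δ := by
    by_contra! h
    nlinarith [Real.sqrt_pos.mpr (show (0 : ℝ) < 2 by norm_num)]
  have hP : 0 < P := (mul_nonneg hfun_pos.le hc).trans_lt hfar
  have h3δ : 0 < 1 - 3 * δ := by linarith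
  nlinarith [mul_le_mul_of_nonneg_right hkey (mul_nonneg hc hP.le),
    mul_lt_mul_of_pos_left (mul_lt_mul_of_pos_right hfar hP) h3δ]

theorem stmt_1_general {D K r : ℕ} (hD : 0 < D) (hK : 0 < K)
    (A : Fin K → Matrix (Fin D) (Fin D) ℂ) (hA : ∀ k, (A k).IsHermitian)
    (ρstar : Matrix (Fin D) (Fin D) ℂ) (hpsd : ρstar.PosSemidef) (hrank : ρstar.rank ≤ r)
    (δ : ℝ) (hδ0 : 0 ≤ δ) (hδ : δ ≤ 0.09) (hRIP : IsRIP A (2 * r) δ)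
    (yhat e : Fin K → ℝ)
    (he : ∀ k, (e k : ℂ) = (yhat k : ℂ) - Matrix.trace (A k * ρstar))
    (U : Matrix (Fin D) (Fin r) ℂ)
    (hcrit : wGrad A yhat U = 0)
    (hfar : hfun δ * ((D : ℝ) * Real.sqrt r / (K : ℝ)) * specNorm (adjointMap A e)
      < frobNorm (U * Uᴴ - ρstar)) :
    ∃ Δ : Matrix (Fin D) (Fin r) ℂ, wHess A yhat U Δ < 0 := by
  obtain ⟨Z, hZ⟩ := hpsd.exists_mul_conjTranspose_eq (hrank.trans_eq (Fintype.card_fin r).symm)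
  obtain ⟨R, hR, hUZR⟩ := (Uᴴ * Z).exists_mem_unitaryGroup_mul_isHermitian
  have hWW : Z * R * (Z * R)ᴴ = ρstar := by
    rw [conjTranspose_mul, Matrix.mul_assoc, ← Matrix.mul_assoc R, ← star_eq_conjTranspose,
      mem_unitaryGroup_iff.mp hR, Matrix.one_mul, hZ]
  have hMU := residualMatrix_mul_eq_zero_of_wGrad_eq_zero hD hK hcrit
  refine ⟨Complex.I • (U - Z * R), (wHess_I_smul_sub_le hA hδ0 hRIP hpsd.1 he hMU hWW
    (by rwa [← Matrix.mul_assoc])).trans_lt ?_⟩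
  have hc : 0 ≤ (D : ℝ) * √r / K * specNorm (adjointMap A e) :=
    mul_nonneg (by positivity) (norm_nonneg _)
  have hneg := quadratic_neg_of_hfun_mul_lt hδ0 hδ hc (by rwa [← mul_assoc])
  rw [Real.sqrt_mul zero_le_two]
  refine lt_of_eq_of_lt ?_ hneg
  ring

/-- Any critical point far from the target is a strict saddle point. -/
theorem stmt_1 {D K r : ℕ} (hD : 0 < D) (hK : 0 < K) (hr : 0 < r) (hrD : r ≤ D)
    (A : Fin K → Matrix (Fin D) (Fin D) ℂ) (hA : ∀ k, (A k).IsHermitian)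
    (ρstar : Matrix (Fin D) (Fin D) ℂ) (hpsd : ρstar.PosSemidef) (hrank : ρstar.rank ≤ r)
    (δ : ℝ) (hδ0 : 0 ≤ δ) (hδ : δ ≤ 0.09) (hRIP : IsRIP A (2 * r) δ)
    (yhat e : Fin K → ℝ)
    (he : ∀ k, (e k : ℂ) = (yhat k : ℂ) - Matrix.trace (A k * ρstar))
    (U : Matrix (Fin D) (Fin r) ℂ)
    (hcrit : wGrad A yhat U = 0)
    (hfar : hfun δ * ((D : ℝ) * Real.sqrt r / (K : ℝ)) * specNorm (adjointMap A e)
      < frobNorm (U * Uᴴ - ρstar)) :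
    ∃ Δ : Matrix (Fin D) (Fin r) ℂ, wHess A yhat U Δ < 0 :=
  stmt_1_general hD hK A hA ρstar hpsd hrank δ hδ0 hδ hRIP yhat e he U hcrit hfar
end

section
/- (First-order information at a critical point) Let ρ★ ∈ ℂ^{D×D} be Hermitian positive semidefinite with rank(ρ★) ≤ r, and suppose the measurement map 𝒜 satisfies the (2r, δ)-RIP. Let ŷ ∈ ℝ^K and e_k = ŷ_k − trace(A_k ρ★). If U ∈ ℂ^{D×r} satisfies G(U) = 0, then ‖(U U^H − ρ★)·P_U‖_F ≤ 2δ·‖U U^H − ρ★‖_F + (D·√(2r)/K)·‖𝒜*(e)‖, where P_U denotes the orthogonal projection matrix onto the column space of U (the unique Hermitian idempotent matrix whose range equals the column space of U). -/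
open Matrix
open scoped BigOperators ComplexOrder

/-!
Write `M = U Uᴴ - ρ★` as `X + Y` with `Y = M P_U` and `X = M (1 - P_U)`. These two pieces are
Frobenius-orthogonal and both have rank at most `r`: `X = ρ★ (P_U - 1)` because `P_U` fixes
`U Uᴴ`. At a critical point the residual `𝒜*(𝒜(U Uᴴ) - ŷ)` annihilates `U`, hence the range of
`P_U`, so pairing the measurements of `M` and `Y` only sees the noise:
`(D/K) ⟨𝒜 M, 𝒜 Y⟩ = (D/K) tr (𝒜*(e) Y) ≤ (D/K) ‖𝒜*(e)‖ √r ‖Y‖_F`. Combined with the lower RIP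
bound for `Y` and the RIP cross bound `⟨X, Y⟩ - (D/K) ⟨𝒜 X, 𝒜 Y⟩ ≤ δ ‖X‖_F ‖Y‖_F` this gives
`‖Y‖_F² ≤ (2 δ ‖M‖_F + (D/K) √(2r) ‖𝒜*(e)‖) ‖Y‖_F`.
-/

open scoped InnerProductSpace

section NearIsometry

variable {𝕜 V E F : Type*} [RCLike 𝕜] [AddCommGroup V] [Module 𝕜 V]
  [NormedAddCommGroup E] [InnerProductSpace 𝕜 E] [NormedAddCommGroup F] [InnerProductSpace 𝕜 F]

def NearIsometricAt (Φ : V →ₗ[𝕜] E) (T : V →ₗ[𝕜] F) (δ : ℝ) (v : V) : Prop :=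
  (1 - δ) * ‖Φ v‖ ^ 2 ≤ ‖T v‖ ^ 2 ∧ ‖T v‖ ^ 2 ≤ (1 + δ) * ‖Φ v‖ ^ 2

variable {Φ : V →ₗ[𝕜] E} {T : V →ₗ[𝕜] F} {δ : ℝ}

open RCLike

theorem re_inner_sub_re_inner_le_of_nearIsometricAt {x y : V}
    (hadd : NearIsometricAt Φ T δ (x + y)) (hsub : NearIsometricAt Φ T δ (x - y)) :
    re ⟪Φ x, Φ y⟫_𝕜 - re ⟪T x, T y⟫_𝕜 ≤ δ / 2 * (‖Φ x‖ ^ 2 + ‖Φ y‖ ^ 2) := by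
  have hlow := hadd.1
  have hup := hsub.2
  rw [map_add, map_add, norm_add_sq (𝕜 := 𝕜), norm_add_sq (𝕜 := 𝕜)] at hlow
  rw [map_sub, map_sub, norm_sub_sq (𝕜 := 𝕜), norm_sub_sq (𝕜 := 𝕜)] at hup
  linarith

theorem re_inner_sub_re_inner_le_mul_norm {x y : V}
    (h : ∀ a b : 𝕜, NearIsometricAt Φ T δ (a • x + b • y)) :
    re ⟪Φ x, Φ y⟫_𝕜 - re ⟪T x, T y⟫_𝕜 ≤ δ * (‖Φ x‖ * ‖Φ y‖) := by
  have hzero {v : V} (hv : NearIsometricAt Φ T δ v) (h0 : Φ v = 0) : T v = 0 := by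
    simpa [h0] using hv.2
  rcases eq_or_ne (Φ x) 0 with hx | hx
  · simp [hx, hzero (by simpa using h 1 0) hx]
  rcases eq_or_ne (Φ y) 0 with hy | hy
  · simp [hy, hzero (by simpa using h 0 1) hy]
  have hx' : 0 < ‖Φ x‖ := norm_pos_iff.2 hx
  have hy' : 0 < ‖Φ y‖ := norm_pos_iff.2 hy
  -- for unit vectors the polarised bound already reads `≤ δ`, so normalise `x` and `y`
  have hunit := re_inner_sub_re_inner_le_of_nearIsometricAt
    (x := ((‖Φ x‖⁻¹ : ℝ) : 𝕜) • x) (y := ((‖Φ y‖⁻¹ : ℝ) : 𝕜) • y) (h _ _)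
    (by simpa [sub_eq_add_neg] using h ((‖Φ x‖⁻¹ : ℝ) : 𝕜) (-((‖Φ y‖⁻¹ : ℝ) : 𝕜)))
  simp only [map_smul, inner_smul_left, inner_smul_right, norm_smul, conj_ofReal,
    re_ofReal_mul, norm_ofReal, abs_inv, abs_norm] at hunit
  rw [inv_mul_cancel₀ hx'.ne', inv_mul_cancel₀ hy'.ne'] at hunit
  have := mul_le_mul_of_nonneg_left hunit (by positivity : 0 ≤ ‖Φ x‖ * ‖Φ y‖)
  field_simp at this
  linarith

theorem norm_le_of_nearIsometricAt_of_re_inner_eq_zero (hδ : 0 ≤ δ) {x y : V}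
    (horth : re ⟪Φ x, Φ y⟫_𝕜 = 0) (h : ∀ a b : 𝕜, NearIsometricAt Φ T δ (a • x + b • y))
    {c : ℝ} (hc : 0 ≤ c) (hcy : re ⟪T (x + y), T y⟫_𝕜 ≤ c * ‖Φ y‖) :
    ‖Φ y‖ ≤ 2 * δ * ‖Φ (x + y)‖ + c := by
  have hcross := re_inner_sub_re_inner_le_mul_norm h
  have hlow : (1 - δ) * ‖Φ y‖ ^ 2 ≤ ‖T y‖ ^ 2 := by simpa using (h 0 1).1
  have hsplit : ‖T y‖ ^ 2 = re ⟪T (x + y), T y⟫_𝕜 - re ⟪T x, T y⟫_𝕜 := by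
    rw [map_add, inner_add_left, map_add, ← inner_self_eq_norm_sq (𝕜 := 𝕜)]
    ring
  have hpyth : ‖Φ (x + y)‖ ^ 2 = ‖Φ x‖ ^ 2 + ‖Φ y‖ ^ 2 := by
    rw [map_add, norm_add_sq (𝕜 := 𝕜), horth]
    ring
  have hx : ‖Φ x‖ ≤ ‖Φ (x + y)‖ := by
    nlinarith [norm_nonneg (Φ x), norm_nonneg (Φ (x + y))]
  have hy : ‖Φ y‖ ≤ ‖Φ (x + y)‖ := by
    nlinarith [norm_nonneg (Φ y), norm_nonneg (Φ (x + y))]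
  have key : ‖Φ y‖ * ‖Φ y‖ ≤ (2 * δ * ‖Φ (x + y)‖ + c) * ‖Φ y‖ := by
    nlinarith [norm_nonneg (Φ y), mul_le_mul_of_nonneg_left hx hδ, mul_le_mul_of_nonneg_left hy hδ]
  rcases (norm_nonneg (Φ y)).eq_or_lt with h0 | hpos
  · rw [← h0]
    have := norm_nonneg (Φ (x + y))
    positivity
  · exact le_of_mul_le_mul_right key hpos

end NearIsometry

namespace Matrix

variable {K : Type*} [Field K] {l m n p : Type*}

theorem rank_add_le [Fintype n] (X Y : Matrix m n K) : (X + Y).rank ≤ X.rank + Y.rank := by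
  have hle : LinearMap.range (X + Y).mulVecLin ≤
      LinearMap.range X.mulVecLin ⊔ LinearMap.range Y.mulVecLin := by
    rintro _ ⟨v, rfl⟩
    rw [mulVecLin_add]
    exact Submodule.add_mem_sup ⟨v, rfl⟩ ⟨v, rfl⟩
  exact (Submodule.finrank_mono hle).trans (Submodule.finrank_add_le_finrank_add_finrank _ _)

theorem rank_smul_le [Fintype m] [Fintype n] [DecidableEq m] (c : K) (X : Matrix m n K) :
    (c • X).rank ≤ X.rank := by
  simpa only [smul_mul, Matrix.one_mul] using rank_mul_le_right (c • (1 : Matrix m m K)) X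

theorem trace_eq_rank_of_isIdempotentElem [Fintype n] [DecidableEq n] {P : Matrix n n K}
    (hP : IsIdempotentElem P) : P.trace = P.rank := by
  have hlin : IsIdempotentElem (toLin' P) := hP.map toLinAlgEquiv'
  rw [← trace_toLin'_eq, (LinearMap.IsIdempotentElem.isProj_range _ hlin).trace, rank,
    toLin'_apply']

theorem mul_eq_self_of_range_le [Fintype n] [Fintype p] {P : Matrix n n K} {U : Matrix n p K}
    (hP : IsIdempotentElem P) (h : LinearMap.range U.mulVecLin ≤ LinearMap.range P.mulVecLin) :
    P * U = U := by
  refine ext_iff_mulVec.2 fun v => ?_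
  obtain ⟨w, hw⟩ := h ⟨v, rfl⟩
  rw [mulVecLin_apply, mulVecLin_apply] at hw
  rw [← mulVec_mulVec, ← hw, mulVec_mulVec, hP.eq]

theorem mul_eq_zero_of_range_le [Fintype m] [Fintype n] [Fintype p] {B : Matrix l n K}
    {U : Matrix n m K} {P : Matrix n p K} (hBU : B * U = 0)
    (h : LinearMap.range P.mulVecLin ≤ LinearMap.range U.mulVecLin) : B * P = 0 := by
  have hU : LinearMap.range U.mulVecLin ≤ LinearMap.ker B.mulVecLin := by
    rw [LinearMap.range_le_ker_iff, ← mulVecLin_mul, hBU, mulVecLin_zero]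
  exact ext_iff_mulVec.2 fun v => by
    rw [zero_mulVec, ← mulVec_mulVec]
    exact h.trans hU ⟨v, rfl⟩

theorem ofReal_re_trace_mul {n : Type*} [Fintype n] {X Y : Matrix n n ℂ}
    (hX : X.IsHermitian) (hY : Y.IsHermitian) : ((trace (X * Y)).re : ℂ) = trace (X * Y) := by
  rw [← Complex.conj_eq_iff_re, ← Complex.star_def, ← trace_conjTranspose, conjTranspose_mul,
    hX.eq, hY.eq, trace_mul_comm]

end Matrix

section Frobenius

variable {m n p : ℕ}

noncomputable def frobVec : Matrix (Fin m) (Fin n) ℂ →ₗ[ℂ] EuclideanSpace ℂ (Fin m × Fin n) where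
  toFun X := WithLp.toLp 2 fun ij => X ij.1 ij.2
  map_add' _ _ := rfl
  map_smul' _ _ := rfl

theorem frobNorm_eq_norm_frobVec (X : Matrix (Fin m) (Fin n) ℂ) : frobNorm X = ‖frobVec X‖ := by
  rw [EuclideanSpace.norm_eq, frobNorm, ← Fintype.sum_prod_type']
  rfl

theorem inner_frobVec (X Y : Matrix (Fin m) (Fin n) ℂ) :
    ⟪frobVec X, frobVec Y⟫_ℂ = trace (Xᴴ * Y) := by
  simp only [PiLp.inner_apply, RCLike.inner_apply, trace, diag, mul_apply, conjTranspose_apply,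
    Fintype.sum_prod_type]
  rw [Finset.sum_comm]
  exact Finset.sum_congr rfl fun _ _ => Finset.sum_congr rfl fun _ _ => mul_comm _ _

theorem norm_frobVec_sq_eq_sum_col (X : Matrix (Fin m) (Fin n) ℂ) :
    ‖frobVec X‖ ^ 2 = ∑ j, ‖(WithLp.toLp 2 (Xᵀ j) : EuclideanSpace ℂ (Fin m))‖ ^ 2 := by
  simp only [EuclideanSpace.norm_eq, Real.sq_sqrt (Finset.sum_nonneg fun _ _ => sq_nonneg _)]
  rw [Finset.sum_comm, ← Fintype.sum_prod_type']
  rfl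

theorem norm_frobVec_mul_le (B : Matrix (Fin m) (Fin n) ℂ) (C : Matrix (Fin n) (Fin p) ℂ) :
    ‖frobVec (B * C)‖ ≤ specNorm B * ‖frobVec C‖ := by
  have hcol (j : Fin p) : ‖(WithLp.toLp 2 ((B * C)ᵀ j) : EuclideanSpace ℂ (Fin m))‖ ≤
      specNorm B * ‖(WithLp.toLp 2 (Cᵀ j) : EuclideanSpace ℂ (Fin n))‖ := by
    have happ : toEuclideanLin B (WithLp.toLp 2 (Cᵀ j)) = WithLp.toLp 2 ((B * C)ᵀ j) := by
      ext i
      simp [mulVec, dotProduct, mul_apply]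
    rw [← happ]
    exact (LinearMap.toContinuousLinearMap (toEuclideanLin B)).le_opNorm _
  rw [← pow_le_pow_iff_left₀ (norm_nonneg _) (by unfold specNorm; positivity) two_ne_zero,
    mul_pow, norm_frobVec_sq_eq_sum_col, norm_frobVec_sq_eq_sum_col, Finset.mul_sum]
  gcongr with j
  simpa only [mul_pow] using pow_le_pow_left₀ (norm_nonneg _) (hcol j) 2

theorem norm_frobVec_sq_eq_rank {P : Matrix (Fin n) (Fin n) ℂ} (hP : P.IsHermitian)
    (hPP : IsIdempotentElem P) : ‖frobVec P‖ ^ 2 = P.rank := by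
  have h := inner_self_eq_norm_sq (𝕜 := ℂ) (frobVec P)
  rw [inner_frobVec, hP.eq, hPP.eq, trace_eq_rank_of_isIdempotentElem hPP] at h
  simpa using h.symm

theorem inner_frobVec_sub_mul_mul_eq_zero {P : Matrix (Fin n) (Fin n) ℂ} (hP : P.IsHermitian)
    (hPP : IsIdempotentElem P) (M : Matrix (Fin m) (Fin n) ℂ) :
    ⟪frobVec (M - M * P), frobVec (M * P)⟫_ℂ = 0 := by
  rw [inner_frobVec, conjTranspose_sub, conjTranspose_mul, hP.eq, Matrix.sub_mul, trace_sub,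
    Matrix.mul_assoc, trace_mul_comm P, Matrix.mul_assoc, Matrix.mul_assoc M, hPP.eq,
    sub_self]

theorem re_trace_mul_mul_le {N P : Matrix (Fin n) (Fin n) ℂ} (hN : N.IsHermitian)
    (hP : P.IsHermitian) (hPP : IsIdempotentElem P) (Z : Matrix (Fin n) (Fin n) ℂ) :
    (trace (N * (Z * P))).re ≤ specNorm N * √(P.rank : ℝ) * ‖frobVec (Z * P)‖ := by
  have htr : trace (N * (Z * P)) = ⟪frobVec (N * P), frobVec (Z * P)⟫_ℂ := by
    rw [inner_frobVec, conjTranspose_mul, hP.eq, hN.eq, Matrix.mul_assoc, trace_mul_comm P,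
      Matrix.mul_assoc, Matrix.mul_assoc Z, hPP.eq]
  calc (trace (N * (Z * P))).re ≤ ‖frobVec (N * P)‖ * ‖frobVec (Z * P)‖ := by
        rw [htr]
        exact re_inner_le_norm (𝕜 := ℂ) _ _
    _ ≤ specNorm N * ‖frobVec P‖ * ‖frobVec (Z * P)‖ := by
        gcongr
        exact norm_frobVec_mul_le N P
    _ = specNorm N * √(P.rank : ℝ) * ‖frobVec (Z * P)‖ := by
        rw [← norm_frobVec_sq_eq_rank hP hPP, Real.sqrt_sq (norm_nonneg _)]

end Frobenius

section Measurement

variable {D K : ℕ} {A : Fin K → Matrix (Fin D) (Fin D) ℂ}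

theorem adjointMap_add (e f : Fin K → ℝ) :
    adjointMap A (e + f) = adjointMap A e + adjointMap A f := by
  simp [adjointMap, add_smul, Finset.sum_add_distrib]

theorem adjointMap_isHermitian (hA : ∀ k, (A k).IsHermitian) (e : Fin K → ℝ) :
    (adjointMap A e).IsHermitian := by
  simp only [IsHermitian, adjointMap, conjTranspose_sum, conjTranspose_smul, Complex.star_def,
    Complex.conj_ofReal, (hA _).eq]

theorem trace_adjointMap_mul (e : Fin K → ℝ) (Y : Matrix (Fin D) (Fin D) ℂ) :
    trace (adjointMap A e * Y) = ∑ k, (e k : ℂ) * trace (A k * Y) := by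
  simp [adjointMap, Finset.sum_mul, trace_sum, trace_smul]

variable (A) in
/-- Scaled by `√(D / K)`, so that `IsRIP A s δ` says exactly that this map is
`δ`-near-isometric to `frobVec` on matrices of rank at most `s`. -/
noncomputable def normalizedMeas : Matrix (Fin D) (Fin D) ℂ →ₗ[ℂ] EuclideanSpace ℂ (Fin K) where
  toFun ρ := WithLp.toLp 2 fun k => (√((D : ℝ) / K) : ℂ) * trace (A k * ρ)
  map_add' X Y := by
    ext k
    simp [mul_add]
  map_smul' c X := by
    ext k
    simp only [Matrix.mul_smul, trace_smul, smul_eq_mul, RingHom.id_apply, PiLp.smul_apply]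
    ring

theorem norm_normalizedMeas_sq (ρ : Matrix (Fin D) (Fin D) ℂ) :
    ‖normalizedMeas A ρ‖ ^ 2 = (D : ℝ) / K * ∑ k, ‖trace (A k * ρ)‖ ^ 2 := by
  rw [EuclideanSpace.norm_eq, Real.sq_sqrt (Finset.sum_nonneg fun _ _ => sq_nonneg _),
    Finset.mul_sum]
  refine Finset.sum_congr rfl fun k _ => ?_
  simp only [normalizedMeas, LinearMap.coe_mk, AddHom.coe_mk, norm_mul, Complex.norm_real,
    Real.norm_eq_abs, mul_pow, sq_abs, Real.sq_sqrt (by positivity : (0 : ℝ) ≤ D / K)]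

theorem IsRIP.nearIsometricAt {s : ℕ} {δ : ℝ} (h : IsRIP A s δ) {ρ : Matrix (Fin D) (Fin D) ℂ}
    (hρ : ρ.rank ≤ s) : NearIsometricAt frobVec (normalizedMeas A) δ ρ := by
  simpa only [NearIsometricAt, ← frobNorm_eq_norm_frobVec, norm_normalizedMeas_sq] using h ρ hρ

theorem inner_normalizedMeas_of_isHermitian (hA : ∀ k, (A k).IsHermitian)
    {X : Matrix (Fin D) (Fin D) ℂ} (hX : X.IsHermitian) (Y : Matrix (Fin D) (Fin D) ℂ) :
    ⟪normalizedMeas A X, normalizedMeas A Y⟫_ℂ =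
      ((D : ℝ) / K : ℝ) * trace (adjointMap A (fun k => (trace (A k * X)).re) * Y) := by
  have hκ : (√((D : ℝ) / K) : ℂ) * √((D : ℝ) / K) = ((D : ℝ) / K : ℝ) := by
    rw [← Complex.ofReal_mul, Real.mul_self_sqrt (by positivity)]
  simp only [normalizedMeas, LinearMap.coe_mk, AddHom.coe_mk, PiLp.inner_apply,
    RCLike.inner_apply, map_mul, Complex.conj_ofReal, trace_adjointMap_mul, Finset.mul_sum]
  refine Finset.sum_congr rfl fun k _ => ?_
  have hreal := ofReal_re_trace_mul (hA k) hX
  rw [hreal, Complex.conj_eq_iff_re.2 hreal]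
  linear_combination (trace (A k * X) * trace (A k * Y)) * hκ

end Measurement

section CriticalPoint

variable {D K r : ℕ} {A : Fin K → Matrix (Fin D) (Fin D) ℂ} {yhat : Fin K → ℝ}

theorem wGrad_eq_smul_adjointMap_mul (hA : ∀ k, (A k).IsHermitian)
    (U : Matrix (Fin D) (Fin r) ℂ) :
    wGrad A yhat U = ((D : ℂ) / K) •
      (adjointMap A (fun k => (trace (A k * (U * Uᴴ))).re - yhat k) * U) := by
  simp only [wGrad, adjointMap, Matrix.sum_mul, Matrix.smul_mul, Complex.ofReal_sub,
    ofReal_re_trace_mul (hA _) (isHermitian_mul_conjTranspose_self U)]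

theorem inner_normalizedMeas_mul_eq_trace_adjointMap_mul (hA : ∀ k, (A k).IsHermitian)
    {ρ : Matrix (Fin D) (Fin D) ℂ} (hρ : ρ.IsHermitian) {e : Fin K → ℝ}
    (he : ∀ k, (e k : ℂ) = yhat k - trace (A k * ρ)) (U : Matrix (Fin D) (Fin r) ℂ)
    {P : Matrix (Fin D) (Fin D) ℂ} (hP : P.IsHermitian)
    (hRP : adjointMap A (fun k => (trace (A k * (U * Uᴴ))).re - yhat k) * P = 0) :
    ⟪normalizedMeas A (U * Uᴴ - ρ), normalizedMeas A ((U * Uᴴ - ρ) * P)⟫_ℂ =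
      ((D : ℝ) / K : ℝ) * trace (adjointMap A e * ((U * Uᴴ - ρ) * P)) := by
  set R := adjointMap A fun k => (trace (A k * (U * Uᴴ))).re - yhat k
  have hsplit : adjointMap A (fun k => (trace (A k * (U * Uᴴ - ρ))).re) =
      R + adjointMap A e := by
    rw [← adjointMap_add]
    congr 1
    funext k
    have hek := congrArg Complex.re (he k)
    simp only [Complex.ofReal_re, Complex.sub_re] at hek
    simp only [Matrix.mul_sub, trace_sub, Complex.sub_re, Pi.add_apply, hek]
    ring
  have hPR : P * R = 0 := by
    simpa [conjTranspose_mul, hP.eq, (adjointMap_isHermitian hA _).eq, R] using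
      congrArg conjTranspose hRP
  rw [inner_normalizedMeas_of_isHermitian hA ((isHermitian_mul_conjTranspose_self U).sub hρ),
    hsplit, Matrix.add_mul, trace_add, trace_mul_comm R, Matrix.mul_assoc, hPR, Matrix.mul_zero,
    trace_zero, zero_add]

theorem re_inner_normalizedMeas_mul_le (hA : ∀ k, (A k).IsHermitian)
    {ρ : Matrix (Fin D) (Fin D) ℂ} (hρ : ρ.IsHermitian) {e : Fin K → ℝ}
    (he : ∀ k, (e k : ℂ) = yhat k - trace (A k * ρ)) (U : Matrix (Fin D) (Fin r) ℂ)
    {P : Matrix (Fin D) (Fin D) ℂ} (hP : P.IsHermitian) (hPP : IsIdempotentElem P)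
    (hRP : adjointMap A (fun k => (trace (A k * (U * Uᴴ))).re - yhat k) * P = 0) :
    (⟪normalizedMeas A (U * Uᴴ - ρ), normalizedMeas A ((U * Uᴴ - ρ) * P)⟫_ℂ).re ≤
      (D : ℝ) / K * (specNorm (adjointMap A e) * √(P.rank : ℝ) *
        ‖frobVec ((U * Uᴴ - ρ) * P)‖) := by
  rw [inner_normalizedMeas_mul_eq_trace_adjointMap_mul hA hρ he U hP hRP, Complex.re_ofReal_mul]
  exact mul_le_mul_of_nonneg_left (re_trace_mul_mul_le (adjointMap_isHermitian hA e) hP hPP _)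
    (by positivity)

theorem rank_sub_mul_le {s : ℕ} {ρ : Matrix (Fin D) (Fin D) ℂ} (hρ : ρ.rank ≤ s)
    {U : Matrix (Fin D) (Fin r) ℂ} {P : Matrix (Fin D) (Fin D) ℂ} (hP : P.IsHermitian)
    (hPU : P * U = U) : (U * Uᴴ - ρ - (U * Uᴴ - ρ) * P).rank ≤ s := by
  have hUP : Uᴴ * P = Uᴴ := by
    simpa [conjTranspose_mul, hP.eq] using congrArg conjTranspose hPU
  have hX : U * Uᴴ - ρ - (U * Uᴴ - ρ) * P = ρ * (P - 1) := by
    rw [Matrix.sub_mul, Matrix.mul_assoc, hUP, Matrix.mul_sub, Matrix.mul_one]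
    abel
  rw [hX]
  exact (rank_mul_le_left _ _).trans hρ

end CriticalPoint

theorem stmt_9_general {D K r : ℕ} (hD : 0 < D) (hK : 0 < K)
    (A : Fin K → Matrix (Fin D) (Fin D) ℂ) (hA : ∀ k, (A k).IsHermitian)
    (ρstar : Matrix (Fin D) (Fin D) ℂ) (hpsd : ρstar.PosSemidef) (hrank : ρstar.rank ≤ r)
    (δ : ℝ) (hδ0 : 0 ≤ δ) (hRIP : IsRIP A (2 * r) δ)
    (yhat e : Fin K → ℝ)
    (he : ∀ k, (e k : ℂ) = (yhat k : ℂ) - Matrix.trace (A k * ρstar))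
    (U : Matrix (Fin D) (Fin r) ℂ)
    (hcrit : wGrad A yhat U = 0)
    (Pu : Matrix (Fin D) (Fin D) ℂ)
    (hPherm : Pu.IsHermitian) (hPidem : Pu * Pu = Pu)
    (hPrange : LinearMap.range Pu.mulVecLin = LinearMap.range U.mulVecLin) :
    frobNorm ((U * Uᴴ - ρstar) * Pu) ≤
      2 * δ * frobNorm (U * Uᴴ - ρstar)
        + (D : ℝ) * Real.sqrt (2 * r) / (K : ℝ) * specNorm (adjointMap A e) := by
  set M := U * Uᴴ - ρstar
  have hRU : adjointMap A (fun k => (trace (A k * (U * Uᴴ))).re - yhat k) * U = 0 := by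
    rw [wGrad_eq_smul_adjointMap_mul hA, smul_eq_zero] at hcrit
    exact hcrit.resolve_left (by simp [hD.ne', hK.ne'])
  have hrankP : Pu.rank ≤ r := by
    rw [rank, hPrange]
    exact rank_le_width U
  have hrip (a b : ℂ) :
      NearIsometricAt frobVec (normalizedMeas A) δ (a • (M - M * Pu) + b • (M * Pu)) := by
    refine hRIP.nearIsometricAt ((rank_add_le _ _).trans ?_)
    rw [two_mul]
    exact add_le_add ((rank_smul_le a _).trans
        (rank_sub_mul_le hrank hPherm (mul_eq_self_of_range_le hPidem hPrange.ge)))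
      ((rank_smul_le b _).trans ((rank_mul_le_right _ _).trans hrankP))
  have hnoise : (⟪normalizedMeas A (M - M * Pu + M * Pu), normalizedMeas A (M * Pu)⟫_ℂ).re ≤
      (D : ℝ) * √(2 * r) / K * specNorm (adjointMap A e) * ‖frobVec (M * Pu)‖ := by
    rw [sub_add_cancel]
    calc _ ≤ (D : ℝ) / K * (specNorm (adjointMap A e) * √(Pu.rank : ℝ) * ‖frobVec (M * Pu)‖) :=
          re_inner_normalizedMeas_mul_le hA hpsd.isHermitian he U hPherm hPidem
            (mul_eq_zero_of_range_le hRU hPrange.le)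
      _ ≤ (D : ℝ) / K * (specNorm (adjointMap A e) * √(2 * r) * ‖frobVec (M * Pu)‖) := by
          gcongr
          · exact norm_nonneg _
          · exact_mod_cast hrankP.trans (Nat.le_mul_of_pos_left r two_pos)
      _ = _ := by ring
  have key := norm_le_of_nearIsometricAt_of_re_inner_eq_zero hδ0
    (by rw [inner_frobVec_sub_mul_mul_eq_zero hPherm hPidem]; rfl) hrip
    (by unfold specNorm; positivity) hnoise
  rwa [sub_add_cancel, ← frobNorm_eq_norm_frobVec, ← frobNorm_eq_norm_frobVec] at key

/-- First-order information at a critical point. -/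
theorem stmt_9 {D K r : ℕ} (hD : 0 < D) (hK : 0 < K) (hr : 0 < r) (hrD : r ≤ D)
    (A : Fin K → Matrix (Fin D) (Fin D) ℂ) (hA : ∀ k, (A k).IsHermitian)
    (ρstar : Matrix (Fin D) (Fin D) ℂ) (hpsd : ρstar.PosSemidef) (hrank : ρstar.rank ≤ r)
    (δ : ℝ) (hδ0 : 0 ≤ δ) (hδ1 : δ < 1) (hRIP : IsRIP A (2 * r) δ)
    (yhat e : Fin K → ℝ)
    (he : ∀ k, (e k : ℂ) = (yhat k : ℂ) - Matrix.trace (A k * ρstar))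
    (U : Matrix (Fin D) (Fin r) ℂ)
    (hcrit : wGrad A yhat U = 0)
    (Pu : Matrix (Fin D) (Fin D) ℂ)
    (hPherm : Pu.IsHermitian) (hPidem : Pu * Pu = Pu)
    (hPrange : LinearMap.range Pu.mulVecLin = LinearMap.range U.mulVecLin) :
    frobNorm ((U * Uᴴ - ρstar) * Pu) ≤
      2 * δ * frobNorm (U * Uᴴ - ρstar)
        + (D : ℝ) * Real.sqrt (2 * r) / (K : ℝ) * specNorm (adjointMap A e) :=
  stmt_9_general hD hK A hA ρstar hpsd hrank δ hδ0 hRIP yhat e he U hcrit Pu hPherm hPidem hPrange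
end

section
/- (RIP polarization inequality) Suppose the measurement map 𝒜 satisfies the (2r, δ)-RIP. Then for any ρ₁, ρ₂ ∈ ℂ^{D×D} each of rank at most r, |(D/K)·⟨𝒜(ρ₁), 𝒜(ρ₂)⟩ − ⟨ρ₁, ρ₂⟩| ≤ 2δ·‖ρ₁‖_F·‖ρ₂‖_F, where ⟨x, y⟩ = Σ_{k=1}^K conj(x_k)·y_k for x, y ∈ ℂ^K and ⟨ρ₁, ρ₂⟩ = trace(ρ₁^H ρ₂). -/
open Matrix
open scoped BigOperators ComplexOrder

/-! The defect `c ‖𝒜 z‖² - ‖z‖²` of the RIP is a quadratic form whose sesquilinear polarization is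
`c ⟪𝒜 x, 𝒜 y⟫ - ⟪x, y⟫`. The complex polarization identity expresses the latter through the
defect at `x ± y` and `x ± i y`, all of rank at most `2r`, and the parallelogram law turns the
four RIP bounds into `δ (‖x‖² + ‖y‖²)`. Applied to `‖y‖ x` and `‖x‖ y`, whose norms agree, this
gives `2 δ ‖x‖ ‖y‖`. Vectorization identifies the Frobenius inner product with the Euclidean
one, so the argument runs in inner product spaces. -/

open scoped InnerProductSpace

namespace Matrix

variable {R m n : Type*} [Field R] [Fintype n]

theorem rank_add_le_s12 (A B : Matrix m n R) : (A + B).rank ≤ A.rank + B.rank := by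
  rw [rank, rank, rank, mulVecLin_add]
  exact (Submodule.finrank_mono (LinearMap.range_add_le _ _)).trans
    (Submodule.finrank_add_le_finrank_add_finrank _ _)

theorem rank_smul_le_s12 (c : R) (A : Matrix m n R) : (c • A).rank ≤ A.rank := by
  rcases eq_or_ne c 0 with rfl | hc
  · simp
  · exact (rank_smul_of_mem_nonZeroDivisors A (mem_nonZeroDivisors_of_ne_zero hc)).le

theorem rank_smul_add_smul_le (a b : R) (A B : Matrix m n R) :
    (a • A + b • B).rank ≤ A.rank + B.rank :=
  (rank_add_le_s12 _ _).trans (add_le_add (rank_smul_le_s12 a A) (rank_smul_le_s12 b B))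

end Matrix

section Polarization

variable {M E F : Type*} [AddCommGroup M] [Module ℂ M]
  [NormedAddCommGroup E] [InnerProductSpace ℂ E] [NormedAddCommGroup F] [InnerProductSpace ℂ F]
  (U : M →ₗ[ℂ] E) (T : M →ₗ[ℂ] F) (c : ℝ)

def normSqDefect (z : M) : ℝ := c * ‖T z‖ ^ 2 - ‖U z‖ ^ 2

theorem four_mul_inner_sub_inner_eq_normSqDefect (x y : M) :
    4 * ((c : ℂ) * ⟪T x, T y⟫_ℂ - ⟪U x, U y⟫_ℂ) =
      normSqDefect U T c (x + y) - normSqDefect U T c (x - y)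
        + (normSqDefect U T c (x - Complex.I • y) - normSqDefect U T c (x + Complex.I • y))
          * Complex.I := by
  have hE (z : E) : ((‖z‖ ^ 2 : ℝ) : ℂ) = ⟪z, z⟫_ℂ := by rw [inner_self_eq_norm_sq_to_K]; simp
  have hF (z : F) : ((‖z‖ ^ 2 : ℝ) : ℂ) = ⟪z, z⟫_ℂ := by rw [inner_self_eq_norm_sq_to_K]; simp
  simp only [normSqDefect, Complex.ofReal_sub, Complex.ofReal_mul, hE, hF, map_add, map_sub,
    map_smul, inner_add_left, inner_add_right, inner_sub_left, inner_sub_right, inner_smul_left,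
    inner_smul_right, Complex.conj_I]
  ring_nf
  simp only [Complex.I_sq]
  ring

theorem norm_sq_polarization_sum (u v : E) :
    ‖u + v‖ ^ 2 + ‖u - v‖ ^ 2 + ‖u - Complex.I • v‖ ^ 2 + ‖u + Complex.I • v‖ ^ 2
      = 4 * (‖u‖ ^ 2 + ‖v‖ ^ 2) := by
  have h₁ := parallelogram_law_with_norm ℂ u v
  have h₂ := parallelogram_law_with_norm ℂ u (Complex.I • v)
  rw [norm_smul, Complex.norm_I, one_mul] at h₂
  linarith

variable {U T c} {δ : ℝ}

theorem norm_inner_sub_inner_le_of_forall_add_smul {x y : M}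
    (h : ∀ b : ℂ, |normSqDefect U T c (x + b • y)| ≤ δ * ‖U (x + b • y)‖ ^ 2) :
    ‖(c : ℂ) * ⟪T x, T y⟫_ℂ - ⟪U x, U y⟫_ℂ‖ ≤ δ * (‖U x‖ ^ 2 + ‖U y‖ ^ 2) := by
  have h₁ := h 1
  have h₂ := h (-1)
  have h₃ := h (-Complex.I)
  have h₄ := h Complex.I
  simp only [one_smul, neg_smul, ← sub_eq_add_neg] at h₁ h₂ h₃ h₄
  have hsum := norm_sq_polarization_sum (U x) (U y)
  simp only [← map_add, ← map_sub, ← map_smul] at hsum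
  have h4B := congrArg norm (four_mul_inner_sub_inner_eq_normSqDefect U T c x y)
  rw [norm_mul, RCLike.norm_ofNat] at h4B
  have htriangle : ‖(normSqDefect U T c (x + y) : ℂ) - normSqDefect U T c (x - y)
        + ((normSqDefect U T c (x - Complex.I • y) : ℂ) - normSqDefect U T c (x + Complex.I • y))
          * Complex.I‖
      ≤ |normSqDefect U T c (x + y)| + |normSqDefect U T c (x - y)|
        + (|normSqDefect U T c (x - Complex.I • y)| + |normSqDefect U T c (x + Complex.I • y)|) := by
    refine (norm_add_le _ _).trans (add_le_add ((norm_sub_le _ _).trans_eq ?_) ?_)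
    · simp only [Complex.norm_real, Real.norm_eq_abs]
    · rw [norm_mul, Complex.norm_I, mul_one]
      refine (norm_sub_le _ _).trans_eq ?_
      simp only [Complex.norm_real, Real.norm_eq_abs]
  have hδsum : δ * (‖U (x + y)‖ ^ 2 + ‖U (x - y)‖ ^ 2 + ‖U (x - Complex.I • y)‖ ^ 2
      + ‖U (x + Complex.I • y)‖ ^ 2) = 4 * (δ * (‖U x‖ ^ 2 + ‖U y‖ ^ 2)) := by
    rw [hsum]; ring
  linarith

theorem smul_map_eq_zero_of_map_eq_zero {z : M} (hz : U z = 0)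
    (h : |normSqDefect U T c z| ≤ δ * ‖U z‖ ^ 2) : (c : ℂ) • T z = 0 := by
  simp only [normSqDefect, hz, norm_zero, ne_eq, OfNat.ofNat_ne_zero, not_false_eq_true,
    zero_pow, sub_zero, mul_zero, abs_nonpos_iff, mul_eq_zero, pow_eq_zero_iff, norm_eq_zero] at h
  rcases h with hc | hTz <;> simp [*]

theorem norm_inner_sub_inner_le_two_mul {x y : M}
    (h : ∀ a b : ℂ, |normSqDefect U T c (a • x + b • y)| ≤ δ * ‖U (a • x + b • y)‖ ^ 2) :
    ‖(c : ℂ) * ⟪T x, T y⟫_ℂ - ⟪U x, U y⟫_ℂ‖ ≤ 2 * δ * ‖U x‖ * ‖U y‖ := by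
  rcases eq_or_ne (U x) 0 with hx | hx
  · have hTx := smul_map_eq_zero_of_map_eq_zero hx (by simpa using h 1 0)
    rw [hx, inner_zero_left, sub_zero, ← Complex.conj_ofReal, ← inner_smul_left, hTx]
    simp
  rcases eq_or_ne (U y) 0 with hy | hy
  · have hTy := smul_map_eq_zero_of_map_eq_zero hy (by simpa using h 0 1)
    rw [hy, inner_zero_right, sub_zero, ← inner_smul_right, hTy]
    simp
  have hxy : 0 < ‖U x‖ * ‖U y‖ := mul_pos (norm_pos_iff.2 hx) (norm_pos_iff.2 hy)
  have hscaled := norm_inner_sub_inner_le_of_forall_add_smul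
    (x := (‖U y‖ : ℂ) • x) (y := (‖U x‖ : ℂ) • y)
    fun β => by simpa only [smul_smul] using h ‖U y‖ (β * ‖U x‖)
  simp only [map_smul, inner_smul_left, inner_smul_right, Complex.conj_ofReal, norm_smul,
    Complex.norm_real, Real.norm_eq_abs, abs_norm] at hscaled
  have hfactor : (c : ℂ) * (‖U x‖ * (‖U y‖ * ⟪T x, T y⟫_ℂ)) - ‖U x‖ * (‖U y‖ * ⟪U x, U y⟫_ℂ)
      = ((‖U x‖ * ‖U y‖ : ℝ) : ℂ) * ((c : ℂ) * ⟪T x, T y⟫_ℂ - ⟪U x, U y⟫_ℂ) := by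
    push_cast; ring
  rw [hfactor, norm_mul, Complex.norm_real, Real.norm_of_nonneg hxy.le] at hscaled
  refine le_of_mul_le_mul_left ?_ hxy
  linarith

end Polarization

namespace Matrix

variable {m n : Type*} [Fintype m] [Fintype n]

noncomputable def frobeniusVec : Matrix m n ℂ →ₗ[ℂ] EuclideanSpace ℂ (n × m) where
  toFun A := WithLp.toLp 2 A.vec
  map_add' A B := by rw [vec_add, WithLp.toLp_add]
  map_smul' c A := by rw [vec_smul, WithLp.toLp_smul, RingHom.id_apply]

theorem inner_frobeniusVec (A B : Matrix m n ℂ) :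
    ⟪frobeniusVec A, frobeniusVec B⟫_ℂ = (Aᴴ * B).trace := by
  rw [← star_vec_dotProduct_vec, dotProduct_comm]
  rfl

theorem norm_frobeniusVec {p q : ℕ} (A : Matrix (Fin p) (Fin q) ℂ) :
    ‖frobeniusVec A‖ = frobNorm A := by
  rw [EuclideanSpace.norm_eq, frobNorm, Fintype.sum_prod_type, Finset.sum_comm]
  rfl

end Matrix

section Measurement

variable {ι n : Type*} [Fintype ι] [Fintype n]

noncomputable def measurementMap (A : ι → Matrix n n ℂ) :
    Matrix n n ℂ →ₗ[ℂ] EuclideanSpace ℂ ι where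
  toFun ρ := WithLp.toLp 2 fun k => (A k * ρ).trace
  map_add' ρ σ := by ext k; simp [Matrix.mul_add]
  map_smul' c ρ := by ext k; simp

theorem inner_measurementMap (A : ι → Matrix n n ℂ) (ρ σ : Matrix n n ℂ) :
    ⟪measurementMap A ρ, measurementMap A σ⟫_ℂ =
      ∑ k, (starRingEnd ℂ) (A k * ρ).trace * (A k * σ).trace := by
  simp only [measurementMap, LinearMap.coe_mk, AddHom.coe_mk, EuclideanSpace.inner_toLp_toLp,
    dotProduct, Pi.star_apply, RCLike.star_def, mul_comm]

theorem norm_measurementMap_sq (A : ι → Matrix n n ℂ) (ρ : Matrix n n ℂ) :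
    ‖measurementMap A ρ‖ ^ 2 = ∑ k, ‖(A k * ρ).trace‖ ^ 2 :=
  EuclideanSpace.norm_sq_eq _

end Measurement

theorem IsRIP.abs_normSqDefect_le {D K s : ℕ} {A : Fin K → Matrix (Fin D) (Fin D) ℂ} {δ : ℝ}
    (hRIP : IsRIP A s δ) {ρ : Matrix (Fin D) (Fin D) ℂ} (hρ : ρ.rank ≤ s) :
    |normSqDefect Matrix.frobeniusVec (measurementMap A) ((D : ℝ) / K) ρ|
      ≤ δ * ‖Matrix.frobeniusVec ρ‖ ^ 2 := by
  obtain ⟨hlower, hupper⟩ := hRIP ρ hρ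
  rw [normSqDefect, norm_measurementMap_sq, Matrix.norm_frobeniusVec, abs_le]
  constructor <;> linarith

theorem stmt_12_general {D K r : ℕ}
    (A : Fin K → Matrix (Fin D) (Fin D) ℂ)
    (δ : ℝ) (hRIP : IsRIP A (2 * r) δ)
    (ρ1 ρ2 : Matrix (Fin D) (Fin D) ℂ) (hρ1 : ρ1.rank ≤ r) (hρ2 : ρ2.rank ≤ r) :
    ‖(((D : ℂ) / (K : ℂ)) *
        (∑ k, (starRingEnd ℂ) (Matrix.trace (A k * ρ1)) * Matrix.trace (A k * ρ2))
      - Matrix.trace (ρ1ᴴ * ρ2))‖ ≤ 2 * δ * frobNorm ρ1 * frobNorm ρ2 := by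
  have h := norm_inner_sub_inner_le_two_mul (x := ρ1) (y := ρ2) fun a b =>
    hRIP.abs_normSqDefect_le ((Matrix.rank_smul_add_smul_le a b ρ1 ρ2).trans (by omega))
  rw [inner_measurementMap, Matrix.inner_frobeniusVec, Matrix.norm_frobeniusVec,
    Matrix.norm_frobeniusVec] at h
  push_cast at h
  exact h

/-- RIP polarization inequality. -/
theorem stmt_12 {D K r : ℕ} (hD : 0 < D) (hK : 0 < K) (hr : 0 < r) (hrD : r ≤ D)
    (A : Fin K → Matrix (Fin D) (Fin D) ℂ) (hA : ∀ k, (A k).IsHermitian)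
    (δ : ℝ) (hδ0 : 0 ≤ δ) (hδ1 : δ < 1) (hRIP : IsRIP A (2 * r) δ)
    (ρ1 ρ2 : Matrix (Fin D) (Fin D) ℂ) (hρ1 : ρ1.rank ≤ r) (hρ2 : ρ2.rank ≤ r) :
    ‖(((D : ℂ) / (K : ℂ)) *
        (∑ k, (starRingEnd ℂ) (Matrix.trace (A k * ρ1)) * Matrix.trace (A k * ρ2))
      - Matrix.trace (ρ1ᴴ * ρ2))‖ ≤ 2 * δ * frobNorm ρ1 * frobNorm ρ2 :=
  stmt_12_general A δ hRIP ρ1 ρ2 hρ1 hρ2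
end

section
/- Let U, Y ∈ ℂ^{D×r} be such that U^H Y = Y^H U and U^H Y is positive semidefinite. Then ‖(U − Y)·U^H‖_F² ≤ (1/(2(√2 − 1)))·‖U U^H − Y Y^H‖_F². -/
open Matrix
open scoped BigOperators ComplexOrder

/-!
Write `Δ = U - Y`, `P = Δᴴ Δ`, `B = Uᴴ Y` and `Q = Yᴴ Y - B`. Since `B = Yᴴ U`, the Gram matrices
are `Uᴴ U = P - Q + B` and `Yᴴ Y = Q + B`, and cycling traces expresses both sides through the
real Frobenius pairing `⟨X, Z⟩ = re tr (X Z)` of these Hermitian `r × r` matrices: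
`‖Δ Uᴴ‖² = ⟨P, P⟩ - ⟨P, Q⟩ + ⟨P, B⟩` and `‖U Uᴴ - Y Yᴴ‖² = ⟨P, P⟩ + 2⟨Q, Q⟩ - 2⟨P, Q⟩ + 2⟨P, B⟩`.
Now `⟨P, B⟩ ≥ 0` as both are positive semidefinite, `⟨P, Q⟩ ≤ ‖P‖ ‖Q‖` by Cauchy–Schwarz, and the
claim reduces to `((√2 - 1) ‖P‖ - √2 ‖Q‖)² ≥ 0`.
-/
lemma frobNorm_sq {m n : ℕ} (A : Matrix (Fin m) (Fin n) ℂ) :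
    frobNorm A ^ 2 = (Aᴴ * A).trace.re := by
  rw [frobNorm, Real.sq_sqrt (by positivity), Finset.sum_comm]
  simp only [trace, diag, mul_apply, conjTranspose_apply, Complex.re_sum, RCLike.star_def,
    RCLike.conj_mul]
  norm_cast

lemma re_trace_conjTranspose_mul_le {m n : ℕ} (A B : Matrix (Fin m) (Fin n) ℂ) :
    (Aᴴ * B).trace.re ≤ frobNorm A * frobNorm B := by
  calc (Aᴴ * B).trace.re = ∑ i, ∑ j, (star (A i j) * B i j).re := by
        simp only [trace, diag, mul_apply, conjTranspose_apply, Complex.re_sum]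
        exact Finset.sum_comm
    _ ≤ ∑ p ∈ Finset.univ ×ˢ Finset.univ, ‖A p.1 p.2‖ * ‖B p.1 p.2‖ := by
        rw [Finset.sum_product]
        gcongr with i _ j _
        simpa using Complex.re_le_norm (star (A i j) * B i j)
    _ ≤ frobNorm A * frobNorm B := by
        simpa only [frobNorm, Finset.sum_product] using
          Real.sum_mul_le_sqrt_mul_sqrt (Finset.univ ×ˢ Finset.univ)
          (fun p : Fin m × Fin n => ‖A p.1 p.2‖) (fun p => ‖B p.1 p.2‖)

lemma Matrix.PosSemidef.re_trace_conjTranspose_mul_self_mul_nonneg {m n : Type*} [Fintype m]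
    [Fintype n] {B : Matrix n n ℂ} (hB : B.PosSemidef) (X : Matrix m n ℂ) :
    0 ≤ (Xᴴ * X * B).trace.re := by
  rw [Matrix.mul_assoc, trace_mul_comm]
  exact (Complex.nonneg_iff.mp (hB.mul_mul_conjTranspose_same X).trace_nonneg).1

lemma frobNorm_mul_conjTranspose_sq {m n k : ℕ} (X : Matrix (Fin m) (Fin n) ℂ)
    (U : Matrix (Fin k) (Fin n) ℂ) :
    frobNorm (X * Uᴴ) ^ 2 = (Xᴴ * X * (Uᴴ * U)).trace.re := by
  rw [frobNorm_sq, conjTranspose_mul, conjTranspose_conjTranspose, Matrix.mul_assoc,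
    trace_mul_comm]
  simp only [Matrix.mul_assoc]

lemma frobNorm_mul_conjTranspose_sub_sq {m n : ℕ} (U Y : Matrix (Fin m) (Fin n) ℂ) :
    frobNorm (U * Uᴴ - Y * Yᴴ) ^ 2 = (Uᴴ * U * (Uᴴ * U)).trace.re
      + (Yᴴ * Y * (Yᴴ * Y)).trace.re - 2 * (Uᴴ * Y * (Yᴴ * U)).trace.re := by
  have hcycle (A B C D : Matrix (Fin m) (Fin n) ℂ) :
      (A * Bᴴ * (C * Dᴴ)).trace = (Bᴴ * C * (Dᴴ * A)).trace := by
    rw [Matrix.mul_assoc, trace_mul_comm]; simp only [Matrix.mul_assoc]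
  rw [frobNorm_sq, conjTranspose_sub, conjTranspose_mul, conjTranspose_mul,
    conjTranspose_conjTranspose, conjTranspose_conjTranspose]
  simp only [sub_mul, mul_sub, trace_sub, hcycle, Complex.sub_re]
  rw [trace_mul_comm (Yᴴ * U)]
  ring

lemma trace_sub_add_mul_self {n : Type*} [Fintype n] {R : Type*} [CommRing R]
    (P Q B : Matrix n n R) :
    ((P - Q + B) * (P - Q + B)).trace + ((Q + B) * (Q + B)).trace - 2 * (B * B).trace
      = (P * P).trace + 2 * (Q * Q).trace - 2 * (P * Q).trace + 2 * (P * B).trace := by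
  simp only [add_mul, mul_add, sub_mul, mul_sub, trace_add, trace_sub]
  rw [trace_mul_comm Q P, trace_mul_comm B P, trace_mul_comm B Q]
  ring

lemma sq_sub_add_le_of_le_mul {x y c b : ℝ} (hc : c ≤ x * y) (hb : 0 ≤ b) :
    x ^ 2 - c + b ≤ 1 / (2 * (Real.sqrt 2 - 1)) * (x ^ 2 + 2 * y ^ 2 - 2 * c + 2 * b) := by
  set s := Real.sqrt 2
  have hs : s ^ 2 = 2 := Real.sq_sqrt zero_le_two
  have hs1 : 1 < s := by nlinarith [Real.sqrt_nonneg 2]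
  have hs2 : 0 ≤ 4 - 2 * s := by nlinarith
  have key : x ^ 2 + 2 * y ^ 2 - 2 * c + 2 * b - (x ^ 2 - c + b) * (2 * (s - 1))
      = ((s - 1) * x - s * y) ^ 2 + (4 - 2 * s) * (x * y - c) + (4 - 2 * s) * b := by
    linear_combination (-(x - y) ^ 2) * hs
  rw [div_mul_eq_mul_div, one_mul, le_div_iff₀ (by linarith)]
  linarith [sq_nonneg ((s - 1) * x - s * y), mul_nonneg hs2 (sub_nonneg.mpr hc),
    mul_nonneg hs2 hb]

lemma re_trace_mul_sub_add_le {n : ℕ} {P Q B : Matrix (Fin n) (Fin n) ℂ} (hP : Pᴴ = P)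
    (hQ : Qᴴ = Q) (hPB : 0 ≤ (P * B).trace.re) :
    (P * (P - Q + B)).trace.re ≤ 1 / (2 * (Real.sqrt 2 - 1)) *
      (((P - Q + B) * (P - Q + B)).trace.re + ((Q + B) * (Q + B)).trace.re
        - 2 * (B * B).trace.re) := by
  have hPP : (P * P).trace.re = frobNorm P ^ 2 := by rw [frobNorm_sq, hP]
  have hQQ : (Q * Q).trace.re = frobNorm Q ^ 2 := by rw [frobNorm_sq, hQ]
  have hPQ : (P * Q).trace.re ≤ frobNorm P * frobNorm Q := by
    simpa only [hP] using re_trace_conjTranspose_mul_le P Q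
  have hR := congrArg Complex.re (trace_sub_add_mul_self P Q B)
  simp only [Complex.add_re, Complex.sub_re, Complex.mul_re, Complex.re_ofNat,
    Complex.im_ofNat, zero_mul, sub_zero] at hR
  rw [hR, mul_add, mul_sub, trace_add, trace_sub, Complex.add_re, Complex.sub_re, hPP, hQQ]
  exact sq_sub_add_le_of_le_mul hPQ hPB

theorem stmt_14 {D r : ℕ} (U Y : Matrix (Fin D) (Fin r) ℂ)
    (hsym : Uᴴ * Y = Yᴴ * U) (hpsd : (Uᴴ * Y).PosSemidef) :
    frobNorm ((U - Y) * Uᴴ) ^ 2 ≤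
      1 / (2 * (Real.sqrt 2 - 1)) * frobNorm (U * Uᴴ - Y * Yᴴ) ^ 2 := by
  have hC : Uᴴ * U = (U - Y)ᴴ * (U - Y) - (Yᴴ * Y - Uᴴ * Y) + Uᴴ * Y := by
    rw [conjTranspose_sub, Matrix.sub_mul, Matrix.mul_sub, Matrix.mul_sub, ← hsym]
    abel
  have hQ : (Yᴴ * Y - Uᴴ * Y)ᴴ = Yᴴ * Y - Uᴴ * Y := by
    simp only [conjTranspose_sub, conjTranspose_mul, conjTranspose_conjTranspose, hsym]
  rw [frobNorm_mul_conjTranspose_sq, frobNorm_mul_conjTranspose_sub_sq, ← hsym,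
    ← sub_add_cancel (Yᴴ * Y) (Uᴴ * Y), hC]
  exact re_trace_mul_sub_add_le (isHermitian_conjTranspose_mul_self _) hQ
    (hpsd.re_trace_conjTranspose_mul_self_mul_nonneg _)
end
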